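/- Let h : ℝ^d → ℝ be differentiable and even, let Φ(θ,w) = h(θ − w), and fix w₁,…,w_k ∈ ℝ^d, a ∈ ℝ^k, b ∈ ℝ^k. Then for every i and every θ = (θ₁,…,θ_k) ∈ (ℝ^d)^k, the gradient of L with respect to θ_i equals ∇_{θ_i} L(θ) = 2 Σ_{j≠i} a_i a_j ∇h(θ_i − θ_j) + 2 Σ_{j=1}^k a_i b_j ∇h(θ_i − w_j). Consequently, a differentiable curve t ↦ (θ₁(t),…,θ_k(t)) satisfies the gradient-flow equations dθ_i/dt = −∇_{θ_i}(L/2)(θ(t)) for all i if and only if it satisfies the electron–proton dynamics dθ_i/dt = −Σ_{j≠i} a_i a_j ∇h(θ_i − θ_j) − Σ_{j=1}^k a_i b_j ∇h(θ_i − w_j) for all i (i.e., pairwise forces given by the potential 2Φ, with the particles w₁,…,w_k of charges b_j held fixed and moving particles θ_i of charges a_i). -/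

import Mathlib

open Finset InnerProductSpace

/-!
Differentiating `x ↦ L (Function.update θ i x)` term by term, the pair term `aₘaₙ h(θₘ - θₙ)`
contributes `(δₘᵢ - δₙᵢ) aₘaₙ ∇h(θₘ - θₙ)`. As `h` is even, `∇h` is odd, so the terms with
`n = i` reproduce those with `m = i`: the interaction sum is doubled, and its diagonal term
vanishes because `∇h 0 = 0`. The gradient of `L/2` is half of this, which gives the dynamics.
-/

section
variable {F : Type*} [NormedAddCommGroup F] [InnerProductSpace ℝ F] [CompleteSpace F]

theorem HasGradientAt.add {f g : F → ℝ} {f' g' x : F} (hf : HasGradientAt f f' x)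
    (hg : HasGradientAt g g' x) : HasGradientAt (fun y => f y + g y) (f' + g') x := by
  rw [hasGradientAt_iff_hasFDerivAt, map_add]
  exact hf.hasFDerivAt.add hg.hasFDerivAt

theorem HasGradientAt.const_mul {f : F → ℝ} {f' x : F} (c : ℝ) (hf : HasGradientAt f f' x) :
    HasGradientAt (fun y => c * f y) (c • f') x := by
  rw [hasGradientAt_iff_hasFDerivAt, map_smul]
  exact hf.hasFDerivAt.const_mul c

theorem HasGradientAt.sum {ι : Type*} (s : Finset ι) {f : ι → F → ℝ} {f' : ι → F} {x : F}
    (hf : ∀ i ∈ s, HasGradientAt (f i) (f' i) x) :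
    HasGradientAt (fun y => ∑ i ∈ s, f i y) (∑ i ∈ s, f' i) x := by
  rw [hasGradientAt_iff_hasFDerivAt, map_sum]
  exact HasFDerivAt.fun_sum fun i hi => (hf i hi).hasFDerivAt

theorem hasGradientAt_comp_of_hasFDerivAt_smul_id {g : F → ℝ} {φ : F → F} {c : ℝ} {x : F}
    (hg : DifferentiableAt ℝ g (φ x)) (hφ : HasFDerivAt φ (c • ContinuousLinearMap.id ℝ F) x) :
    HasGradientAt (fun y => g (φ y)) (c • gradient g (φ x)) x := by
  have h := hg.hasGradientAt.hasFDerivAt.comp x hφ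
  rwa [ContinuousLinearMap.comp_smul, ContinuousLinearMap.comp_id, ← map_smul] at h

theorem gradient_neg_of_even {g : F → ℝ} (hg : Differentiable ℝ g) (heven : ∀ y, g (-y) = g y)
    (x : F) : gradient g (-x) = -gradient g x := by
  have h := hasGradientAt_comp_of_hasFDerivAt_smul_id (hg (-x))
    (by simpa using (hasFDerivAt_id x).fun_neg :
      HasFDerivAt (fun y : F => -y) ((-1 : ℝ) • ContinuousLinearMap.id ℝ F) x)
  simp only [heven, neg_one_smul] at h
  rw [h.gradient, neg_neg]

end

section
variable {ι 𝕜 E : Type*} [DecidableEq ι] [NontriviallyNormedField 𝕜]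
  [NormedAddCommGroup E] [NormedSpace 𝕜 E]

theorem hasFDerivAt_update_apply (θ : ι → E) (i j : ι) (x : E) :
    HasFDerivAt (fun y => Function.update θ i y j)
      ((if j = i then 1 else 0 : 𝕜) • ContinuousLinearMap.id 𝕜 E) x := by
  rcases eq_or_ne j i with rfl | hji
  · simp only [Function.update_self, ↓reduceIte, one_smul]
    exact hasFDerivAt_id (𝕜 := 𝕜) x
  · simpa [hji] using hasFDerivAt_const (θ j) x

end

section
variable {ι F : Type*} [Fintype ι] [DecidableEq ι] [AddCommGroup F] [Module ℝ F]

theorem sum_sum_smul_kronecker_sub_smul_of_odd {G : F → F} (hG : ∀ y, G (-y) = -G y)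
    (a : ι → ℝ) (θ : ι → F) (i : ι) :
    ∑ m, ∑ n, (a m * a n) •
        (((if m = i then 1 else 0) - (if n = i then 1 else 0) : ℝ) • G (θ m - θ n))
      = (2:ℝ) • ∑ j ∈ univ.erase i, (a i * a j) • G (θ i - θ j) := by
  have hG0 : G 0 = 0 := by
    have h := hG 0
    rw [neg_zero, eq_neg_iff_add_eq_zero, ← two_smul ℝ] at h
    exact (smul_eq_zero.mp h).resolve_left two_ne_zero
  have hswap : ∀ j, G (θ j - θ i) = -G (θ i - θ j) := fun j => by rw [← hG, neg_sub]
  rw [sum_erase _ (by simp [hG0])]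
  simp [sub_smul, smul_sub, sum_sub_distrib, sum_add_distrib, ite_smul, smul_ite, hswap,
    mul_comm (a _) (a i), two_smul]

end

section PairPotentialLoss

variable {ι F : Type*} [Fintype ι] [DecidableEq ι]
  [NormedAddCommGroup F] [InnerProductSpace ℝ F] [CompleteSpace F]

def pairPotentialLoss (h : F → ℝ) (w : ι → F) (a b : ι → ℝ) (θ : ι → F) : ℝ :=
  ∑ i, ∑ j, (a i * a j * h (θ i - θ j) + 2 * (a i * b j) * h (θ i - w j)
    + b i * b j * h (w i - w j))

theorem hasGradientAt_pairPotentialLoss_update {h : F → ℝ} (hdiff : Differentiable ℝ h)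
    (heven : ∀ x, h (-x) = h x) (w : ι → F) (a b : ι → ℝ) (θ : ι → F) (i : ι) :
    HasGradientAt (fun x => pairPotentialLoss h w a b (Function.update θ i x))
      ((2:ℝ) • ∑ j ∈ univ.erase i, (a i * a j) • gradient h (θ i - θ j)
        + (2:ℝ) • ∑ j, (a i * b j) • gradient h (θ i - w j)) (θ i) := by
  set δ : ι → ℝ := fun m => if m = i then 1 else 0
  have hu : ∀ m, HasFDerivAt (fun x => Function.update θ i x m)
      (δ m • ContinuousLinearMap.id ℝ F) (θ i) := fun m => hasFDerivAt_update_apply θ i m (θ i)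
  have hterm : ∀ m n, HasGradientAt (fun x =>
      a m * a n * h (Function.update θ i x m - Function.update θ i x n)
        + 2 * (a m * b n) * h (Function.update θ i x m - w n) + b m * b n * h (w m - w n))
      ((a m * a n) • ((δ m - δ n) • gradient h (θ m - θ n))
        + (2 * (a m * b n)) • (δ m • gradient h (θ m - w n)) + 0) (θ i) := by
    intro m n
    have hpair := hasGradientAt_comp_of_hasFDerivAt_smul_id (hdiff _)
      ((hu m).fun_sub (hu n) |>.congr_fderiv (sub_smul _ _ _).symm)
    have hfixed := hasGradientAt_comp_of_hasFDerivAt_smul_id (hdiff _) ((hu m).sub_const (w n))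
    simp only [Function.update_eq_self] at hpair hfixed
    exact ((hpair.const_mul _).add (hfixed.const_mul _)).add (hasGradientAt_const _ _)
  have hsum := HasGradientAt.sum univ fun m _ => HasGradientAt.sum univ fun n _ => hterm m n
  have hval : ∑ m, ∑ n, ((a m * a n) • ((δ m - δ n) • gradient h (θ m - θ n))
        + (2 * (a m * b n)) • (δ m • gradient h (θ m - w n)) + 0)
      = (2:ℝ) • ∑ j ∈ univ.erase i, (a i * a j) • gradient h (θ i - θ j)
        + (2:ℝ) • ∑ j, (a i * b j) • gradient h (θ i - w j) := by
    simp only [δ, add_zero, sum_add_distrib,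
      sum_sum_smul_kronecker_sub_smul_of_odd (gradient_neg_of_even hdiff heven)]
    simp [smul_smul, smul_sum]
  rwa [hval] at hsum

end PairPotentialLoss

theorem stmt0 {d k : ℕ}
    (h : EuclideanSpace ℝ (Fin d) → ℝ)
    (hdiff : Differentiable ℝ h) (heven : ∀ x, h (-x) = h x)
    (w : Fin k → EuclideanSpace ℝ (Fin d)) (a b : Fin k → ℝ)
    (L : (Fin k → EuclideanSpace ℝ (Fin d)) → ℝ)
    (hL : L = fun θ => ∑ i, ∑ j,
      (a i * a j * h (θ i - θ j) + 2 * (a i * b j) * h (θ i - w j)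
        + b i * b j * h (w i - w j))) :
    (∀ (θ : Fin k → EuclideanSpace ℝ (Fin d)) (i : Fin k),
      gradient (fun x => L (Function.update θ i x)) (θ i)
        = (2:ℝ) • (∑ j ∈ Finset.univ.erase i, (a i * a j) • gradient h (θ i - θ j))
          + (2:ℝ) • ∑ j, (a i * b j) • gradient h (θ i - w j)) ∧
    (∀ θt : ℝ → Fin k → EuclideanSpace ℝ (Fin d),
      (∀ i, Differentiable ℝ (fun t => θt t i)) →
      ((∀ (t : ℝ) (i : Fin k), HasDerivAt (fun s => θt s i)
          (-gradient (fun x => (1/2 : ℝ) * L (Function.update (θt t) i x)) (θt t i)) t)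
        ↔ (∀ (t : ℝ) (i : Fin k), HasDerivAt (fun s => θt s i)
          (-((∑ j ∈ Finset.univ.erase i, (a i * a j) • gradient h (θt t i - θt t j))
            + ∑ j, (a i * b j) • gradient h (θt t i - w j))) t))) := by
  have hL' : L = pairPotentialLoss h w a b := hL
  subst hL'
  have hgrad := hasGradientAt_pairPotentialLoss_update hdiff heven w a b
  refine ⟨fun θ i => (hgrad θ i).gradient, fun θt _ => ?_⟩
  have hhalf : ∀ t i,
      gradient (fun x => (1/2 : ℝ) * pairPotentialLoss h w a b (Function.update (θt t) i x))
        (θt t i) = ∑ j ∈ univ.erase i, (a i * a j) • gradient h (θt t i - θt t j)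
          + ∑ j, (a i * b j) • gradient h (θt t i - w j) := fun t i => by
    rw [((hgrad (θt t) i).const_mul (1/2)).gradient]
    module
  simp only [hhalf]
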